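/- Let A be a unital C*-algebra, B ⊆ A a commutative unital C*-subalgebra, E : A → B a conditional expectation onto B, and T ∈ A an element satisfying the B-valued circular moment relations with respect to E. Then for every n ≥ 1 and every ε(1),…,ε(n) ∈ {1,*}, one has E(T^{(ε(1))} T^{(ε(2))} ⋯ T^{(ε(n))}) ≥ 0 in B. -/

import Mathlib

open Filter
open scoped ComplexOrder

section Preamble

variable {A : Type*} [CStarAlgebra A] [PartialOrder A] [StarOrderedRing A]

/-- The absolute value `(a* a)^{1/2}` of an element of a C*-algebra. -/
noncomputable def cabs (a : A) : A := CFC.sqrt (star a * a)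

/-- `E : A → A` is a conditional expectation onto the C*-subalgebra `B`:
it takes values in `B`, fixes `B`, is a `B`-bimodule map, and is positive and contractive. -/
structure IsCondExp (B : StarSubalgebra ℂ A) (E : A →ₗ[ℂ] A) : Prop where
  mem_range : ∀ x : A, E x ∈ B
  fixes : ∀ b ∈ B, E b = b
  bimodule : ∀ b₁ ∈ B, ∀ b₂ ∈ B, ∀ x : A, E (b₁ * x * b₂) = b₁ * E x * b₂
  positive : ∀ x : A, 0 ≤ x → 0 ≤ E x
  contractive : ∀ x : A, ‖E x‖ ≤ ‖x‖

/-- `word T [(ε₁,b₁),…,(εₙ,bₙ)] = T^{ε₁} * b₁ * ⋯ * T^{εₙ} * bₙ`, where `true` stands for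
the exponent `1` and `false` for the exponent `*`. -/
def word (T : A) (l : List (Bool × A)) : A :=
  (l.map (fun p => (cond p.1 T (star T)) * p.2)).prod

/-- A word is balanced when there are as many `*`'s as `1`'s among the exponents. -/
abbrev IsBalanced (l : List (Bool × A)) : Prop :=
  2 * l.countP (fun p => p.1) = l.length

/-- `T` satisfies the `B`-valued circular moment relations with respect to `E`:
the expectation of any unbalanced word vanishes, and the expectation of a nonempty balanced word
`T^{ε₁} b₁ ⋯ T^{εₙ} bₙ` satisfies the moment-cumulant recursion of a `B`-valued circular
element, where the sum runs over those positions `j ∈ {2,…,n}` (here `j = i + 2` for the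
`i`-th entry of the tail, `0`-based) for which `ε_j ≠ ε₁` and the prefix `ε₁,…,ε_j` is
balanced. -/
structure IsBCircular (B : StarSubalgebra ℂ A) (E : A →ₗ[ℂ] A) (T : A) : Prop where
  expect_unbalanced : ∀ l : List (Bool × A), (∀ p ∈ l, p.2 ∈ B) →
    ¬ IsBalanced l → E (word T l) = 0
  expect_cons_one : ∀ b ∈ B, ∀ tl : List (Bool × A), (∀ p ∈ tl, p.2 ∈ B) →
    IsBalanced ((true, b) :: tl) →
    E (word T ((true, b) :: tl)) =
      ∑ i ∈ Finset.range tl.length,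
        if (tl.getD i (true, 1)).1 = false ∧ IsBalanced ((true, b) :: tl.take (i + 1)) then
          E (T * (b * E (word T (tl.take i))) * star T) * (tl.getD i (true, 1)).2 *
            E (word T (tl.drop (i + 1)))
        else 0
  expect_cons_star : ∀ b ∈ B, ∀ tl : List (Bool × A), (∀ p ∈ tl, p.2 ∈ B) →
    IsBalanced ((false, b) :: tl) →
    E (word T ((false, b) :: tl)) =
      ∑ i ∈ Finset.range tl.length,
        if (tl.getD i (true, 1)).1 = true ∧ IsBalanced ((false, b) :: tl.take (i + 1)) then
          E (star T * (b * E (word T (tl.take i))) * T) * (tl.getD i (true, 1)).2 *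
            E (word T (tl.drop (i + 1)))
        else 0

end Preamble

/-! The moment-cumulant recursion writes the expectation of a nonempty balanced word as a sum of
terms `E (c · E(w₁) · c*) · E(w₂)` with `c ∈ {T, T*}` and shorter words `w₁, w₂`. By induction
both `E(w₁)` and `E(w₂)` are positive; conjugation and the positivity of `E` keep the first factor
positive, and positive elements of the commutative algebra `B` have positive products. Unbalanced
words have expectation `0`. -/

section

variable {A : Type*} [CStarAlgebra A] [PartialOrder A] [StarOrderedRing A]
  {B : StarSubalgebra ℂ A} {E : A →ₗ[ℂ] A}

lemma IsCondExp.conj_mul_nonneg (hE : IsCondExp B E) (hBcomm : ∀ x ∈ B, ∀ y ∈ B, x * y = y * x)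
    (c : A) {x y : A} (hx : 0 ≤ E x) (hy : 0 ≤ E y) : 0 ≤ E (c * E x * star c) * E y :=
  Commute.mul_nonneg (hE.positive _ (star_right_conjugate_nonneg hx c)) hy
    (hBcomm _ (hE.mem_range _) _ (hE.mem_range _))

lemma List.getD_map_pair_one_snd {α M : Type*} [One M] (l : List α) (d : α) (i : ℕ) :
    ((l.map fun a => (a, (1 : M))).getD i (d, 1)).2 = 1 := by
  rw [List.getD_map l d (fun a => (a, (1 : M)))]

lemma IsBCircular.expect_word_map_one_nonneg (hE : IsCondExp B E)
    (hBcomm : ∀ x ∈ B, ∀ y ∈ B, x * y = y * x) {T : A} (hT : IsBCircular B E T) :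
    ∀ ε : List Bool, 0 ≤ E (word T (ε.map fun e => (e, (1 : A))))
  | [] => by
    rw [List.map_nil, show word T [] = 1 from rfl, hE.fixes 1 (one_mem B)]
    exact zero_le_one
  | e :: tl => by
    have hmem : ∀ p ∈ tl.map fun e => (e, (1 : A)), p.2 ∈ B := by
      simp only [List.mem_map]
      rintro _ ⟨_, -, rfl⟩
      exact one_mem B
    have hsummand (c : A) (i : ℕ) :
        0 ≤ E (c * (1 * E (word T ((tl.map fun e => (e, (1 : A))).take i))) * star c) *
          ((tl.map fun e => (e, (1 : A))).getD i (true, 1)).2 *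
          E (word T ((tl.map fun e => (e, (1 : A))).drop (i + 1))) := by
      rw [List.getD_map_pair_one_snd, mul_one, one_mul, ← List.map_take, ← List.map_drop]
      exact hE.conj_mul_nonneg hBcomm c (hT.expect_word_map_one_nonneg hE hBcomm _)
        (hT.expect_word_map_one_nonneg hE hBcomm _)
    rw [List.map_cons]
    by_cases hbal : IsBalanced ((e, (1 : A)) :: tl.map fun e => (e, (1 : A)))
    · cases e with
      | true =>
        rw [hT.expect_cons_one 1 (one_mem B) _ hmem hbal]
        refine Finset.sum_nonneg fun i _ => ?_
        split_ifs
        exacts [hsummand T i, le_rfl]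
      | false =>
        rw [hT.expect_cons_star 1 (one_mem B) _ hmem hbal]
        refine Finset.sum_nonneg fun i _ => ?_
        split_ifs
        exacts [by simpa only [star_star] using hsummand (star T) i, le_rfl]
    · rw [hT.expect_unbalanced _ (List.forall_mem_cons.2 ⟨one_mem B, hmem⟩) hbal]
termination_by ε => ε.length
decreasing_by all_goals simp only [List.length_take, List.length_drop, List.length_cons]; omega

end

theorem expectation_word_nonneg_general
    {A : Type*} [CStarAlgebra A] [PartialOrder A] [StarOrderedRing A]
    (B : StarSubalgebra ℂ A)
    (hBcomm : ∀ x ∈ B, ∀ y ∈ B, x * y = y * x)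
    (E : A →ₗ[ℂ] A) (hE : IsCondExp B E)
    (T : A) (hT : IsBCircular B E T)
    (ε : List Bool) :
    0 ≤ E (word T (ε.map (fun e => (e, (1 : A))))) :=
  hT.expect_word_map_one_nonneg hE hBcomm ε

/-- For a `B`-valued circular element `T` over a commutative unital C*-subalgebra `B`,
the expectation of any word `T^{ε₁} ⋯ T^{εₙ}` (with `n ≥ 1`) is a positive element of `B`. -/
theorem expectation_word_nonneg
    {A : Type*} [CStarAlgebra A] [PartialOrder A] [StarOrderedRing A]
    (B : StarSubalgebra ℂ A) (hBclosed : IsClosed (B : Set A))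
    (hBcomm : ∀ x ∈ B, ∀ y ∈ B, x * y = y * x)
    (E : A →ₗ[ℂ] A) (hE : IsCondExp B E)
    (T : A) (hT : IsBCircular B E T)
    (ε : List Bool) (hε : ε ≠ []) :
    0 ≤ E (word T (ε.map (fun e => (e, (1 : A))))) :=
  expectation_word_nonneg_general B hBcomm E hE T hT ε
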